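/- arXiv:2507.10909 — 2 statements merged into one kernel-verified Lean document; each statement's English description precedes it below -/
import Mathlib

section
/- Let G be a gyrogroup and H an L-subgyrogroup of G. Then the family of left cosets {a ⊕ H : a ∈ G} forms a disjoint partition of G; that is, every element of G lies in exactly one left coset of H. -/
open Set Topology

universe u

class Gyrogroup (G : Type u) where
  op : G → G → G
  one : G
  inv : G → G
  gyr : G → G → G ≃ G
  one_op : ∀ g, op one g = g
  op_one : ∀ g, op g one = g
  inv_op : ∀ g, op (inv g) g = one
  op_inv : ∀ g, op g (inv g) = one
  unique_one : ∀ e : G, (∀ g, op e g = g ∧ op g e = g) → e = one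
  unique_inv : ∀ g h : G, (op h g = one ∧ op g h = one) → h = inv g
  gyr_op : ∀ g h f, op g (op h f) = op (op g h) (gyr g h f)
  gyr_hom : ∀ g h a b, gyr g h (op a b) = op (gyr g h a) (gyr g h b)
  loop : ∀ g h, gyr g h = gyr (op g h) h

namespace Gyrogroup

variable {G : Type u} [Gyrogroup G]

/-- `H` is a subgyrogroup: nonempty and a gyrogroup under the restricted operations. -/
def IsSubgyrogroup (H : Set G) : Prop :=
  H.Nonempty ∧ one ∈ H ∧
  (∀ a ∈ H, ∀ b ∈ H, op a b ∈ H) ∧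
  (∀ a ∈ H, inv a ∈ H) ∧
  (∀ a ∈ H, ∀ b ∈ H, Set.BijOn (gyr a b) H H)

/-- `H` is an L-subgyrogroup: `gyr g h` fixes `H` setwise for every `g ∈ G`, `h ∈ H`. -/
def IsLSubgyrogroup (H : Set G) : Prop :=
  IsSubgyrogroup H ∧ ∀ g : G, ∀ h ∈ H, (gyr g h) '' H = H

def leftCoset (a : G) (H : Set G) : Set G := (fun h => op a h) '' H

/-- The subgyrogroup generated by `S`. -/
def generatedSubgyrogroup (S : Set G) : Set G :=
  ⋂₀ {H : Set G | IsSubgyrogroup H ∧ S ⊆ H}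

/-- The gyrogroup operations are continuous (topological gyrogroup). -/
def ContinuousGyroOps (G : Type u) [Gyrogroup G] [TopologicalSpace G] : Prop :=
  Continuous (fun p : G × G => op p.1 p.2) ∧ Continuous (inv : G → G)

/-- The topology coincides with the order topology of some linear order. -/
def TopologicallyOrderable (G : Type u) [t : TopologicalSpace G] : Prop :=
  ∃ l : LinearOrder G, t = TopologicalSpace.generateFrom
      {s : Set G | ∃ a : G, s = {x | l.lt a x} ∨ s = {x | l.lt x a}}

/-- A strongly topological gyrogroup: a topological gyrogroup with a neighborhood base
at `1` whose members are invariant under all gyroautomorphisms. -/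
def StronglyTopologicalGyrogroup (G : Type u) [Gyrogroup G] [TopologicalSpace G] : Prop :=
  ContinuousGyroOps G ∧
  ∃ 𝒰 : Set (Set G), (∀ U ∈ 𝒰, U ∈ nhds (one : G)) ∧
    (∀ V ∈ nhds (one : G), ∃ U ∈ 𝒰, U ⊆ V) ∧
    (∀ U ∈ 𝒰, ∀ x y : G, (gyr x y) '' U = U)

def StronglyTopologicallyOrderable (G : Type u) [Gyrogroup G] [TopologicalSpace G] : Prop :=
  StronglyTopologicalGyrogroup G ∧ TopologicallyOrderable G

end Gyrogroup

/-!
Left gyroassociativity gives `a ⊕ (h ⊕ h') = (a ⊕ h) ⊕ gyr[a,h] h'`. For `h ∈ H` the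
gyroautomorphism `gyr[a,h]` permutes the L-subgyrogroup `H`, so `(a ⊕ h) ⊕ H = a ⊕ H`:
any coset containing `x` is `x ⊕ H`, and `x ∈ x ⊕ H` because `1 ∈ H`.
-/

namespace Gyrogroup

variable {G : Type u} [Gyrogroup G]

theorem op_left_cancel {a x y : G} (h : op a x = op a y) : x = y := by
  have : op (inv a) (op a x) = op (inv a) (op a y) := by rw [h]
  rw [gyr_op, gyr_op, inv_op, one_op, one_op] at this
  exact (gyr (inv a) a).injective this

theorem gyr_one_left (h f : G) : gyr one h f = f := by
  apply op_left_cancel (a := h)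
  have := gyr_op one h f
  rw [one_op, one_op] at this
  exact this.symm

theorem gyr_inv_right_self (a f : G) : gyr a (inv a) f = f := by
  rw [loop, op_inv, gyr_one_left]

theorem op_inv_cancel_left (a x : G) : op a (op (inv a) x) = x := by
  rw [gyr_op, op_inv, one_op, gyr_inv_right_self]

theorem mem_leftCoset_self {H : Set G} (h1 : one ∈ H) (a : G) : a ∈ leftCoset a H :=
  ⟨one, h1, op_one a⟩

theorem leftCoset_op_eq {H : Set G} (hH : IsLSubgyrogroup H) (a : G) {h : G} (hh : h ∈ H) :
    leftCoset (op a h) H = leftCoset a H := by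
  obtain ⟨⟨-, -, hop, hinv, -⟩, hL⟩ := hH
  apply Set.Subset.antisymm
  · rintro _ ⟨h', hh', rfl⟩
    obtain ⟨h'', hh'', rfl⟩ : h' ∈ gyr a h '' H := by rwa [hL a h hh]
    exact ⟨op h h'', hop _ hh _ hh'', gyr_op a h h''⟩
  · rintro _ ⟨h', hh', rfl⟩
    refine ⟨gyr a h (op (inv h) h'), ?_, ?_⟩
    · rw [← hL a h hh]
      exact mem_image_of_mem _ (hop _ (hinv h hh) _ hh')
    · show op (op a h) (gyr a h (op (inv h) h')) = op a h'
      rw [← gyr_op, op_inv_cancel_left]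

theorem leftCoset_eq_of_mem {H : Set G} (hH : IsLSubgyrogroup H) {a x : G}
    (hx : x ∈ leftCoset a H) : leftCoset x H = leftCoset a H := by
  obtain ⟨h, hh, rfl⟩ := hx
  exact leftCoset_op_eq hH a hh

end Gyrogroup

open Gyrogroup
/-- The left cosets of an L-subgyrogroup form a disjoint partition: every element
lies in exactly one left coset. -/
theorem stmt1 {G : Type u} [Gyrogroup G] (H : Set G) (hH : IsLSubgyrogroup H) :
    ∀ x : G, ∃! C : Set G, (∃ a : G, C = leftCoset a H) ∧ x ∈ C := by
  intro x
  refine ⟨leftCoset x H, ⟨⟨x, rfl⟩, mem_leftCoset_self hH.1.2.1 x⟩, ?_⟩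
  rintro C ⟨⟨a, rfl⟩, hx⟩
  exact (leftCoset_eq_of_mem hH hx).symm
end

section
/- Every topologically orderable gyrogroup has a totally ordered (by reverse inclusion) neighborhood base at the identity element. -/
open Set Topology

universe u

open Gyrogroup

open Cardinal

set_option linter.unusedSectionVars false
set_option maxHeartbeats 1000000

variable {G : Type u} [Gyrogroup G]

theorem gg_inv_one : inv (one : G) = one :=
  (unique_inv one one ⟨op_one one, op_one one⟩).symm

theorem gg_gyr_one_aux (a f : G) : op (inv a) (op a f) = gyr one a f := by
  have h := gyr_op (inv a) a f
  rw [inv_op, one_op] at h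
  rw [h, loop (inv a) a, inv_op]

theorem gg_gyr_one (a f : G) : gyr (one : G) a f = f := by
  have h2 := gyr_op (one : G) a f
  rw [one_op, one_op] at h2
  have h3 : gyr (one : G) a f = gyr one a (gyr one a f) := by
    conv_lhs => rw [← gg_gyr_one_aux a f]
    rw [h2, gg_gyr_one_aux]
  exact ((gyr (one : G) a).injective h3).symm

theorem gg_left_cancel (a f : G) : op (inv a) (op a f) = f := by
  rw [gg_gyr_one_aux a f, gg_gyr_one]

theorem gg_inv_inv (a : G) : inv (inv a) = a :=
  (unique_inv (inv a) a ⟨op_inv a, inv_op a⟩).symm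

theorem gg_left_cancel' (a f : G) : op a (op (inv a) f) = f := by
  have h := gg_left_cancel (inv a) f
  rwa [gg_inv_inv] at h


section TopAux

variable [TopologicalSpace G]

theorem gg_cont_left (hc : Continuous (fun p : G × G => op p.1 p.2)) (a : G) :
    Continuous fun x : G => op a x :=
  hc.comp (continuous_const.prodMk continuous_id)

theorem gg_image_op (a : G) (U : Set G) :
    (fun x : G => op a x) '' U = (fun x : G => op (inv a) x) ⁻¹' U := by
  ext x
  constructor
  · rintro ⟨u, hu, rfl⟩
    simpa [gg_left_cancel] using hu
  · intro hx
    exact ⟨op (inv a) x, hx, gg_left_cancel' a x⟩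

theorem gg_isOpen_image (hc : Continuous (fun p : G × G => op p.1 p.2)) (a : G) {U : Set G}
    (hU : IsOpen U) : IsOpen ((fun x : G => op a x) '' U) := by
  rw [gg_image_op]
  exact hU.preimage (gg_cont_left hc (inv a))

end TopAux

section OrderAux

variable [TopologicalSpace G] [LinearOrder G]

/-- `Ioo p q` is a neighborhood of `one` mapped into `Ioo a b` by products and inverses. -/
def gvld (p q a b : G) : Prop :=
  (∀ x ∈ Ioo p q, ∀ y ∈ Ioo p q, op x y ∈ Ioo a b) ∧ (∀ x ∈ Ioo p q, inv x ∈ Ioo a b)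

theorem gvld_mono {p q a b p' q' a' b' : G} (h : gvld p q a b) (hp : p ≤ p') (hq : q' ≤ q)
    (ha : a' ≤ a) (hb : b ≤ b') : gvld p' q' a' b' := by
  have hsub : Ioo p' q' ⊆ Ioo p q := Ioo_subset_Ioo hp hq
  have hsub2 : Ioo a b ⊆ Ioo a' b' := Ioo_subset_Ioo ha hb
  exact ⟨fun x hx y hy => hsub2 (h.1 x (hsub hx) y (hsub hy)),
    fun x hx => hsub2 (h.2 x (hsub hx))⟩

variable [OrderTopology G]

theorem gg_exists_Ioo {s : Set G} (hs : s ∈ 𝓝 (one : G)) {a b : G} (ha : a < one)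
    (hb : one < b) : ∃ p q, p < one ∧ one < q ∧ Ioo p q ⊆ s := by
  obtain ⟨l, hl, hIoc⟩ := exists_Ioc_subset_of_mem_nhds hs ⟨a, ha⟩
  obtain ⟨u, hu, hIco⟩ := exists_Ico_subset_of_mem_nhds hs ⟨b, hb⟩
  refine ⟨l, u, hl, hu, fun x hx => ?_⟩
  rcases le_total x one with h | h
  · exact hIoc ⟨hx.1, h⟩
  · exact hIco ⟨h, hx.2⟩

theorem gg_cont_valid (hc : ContinuousGyroOps G) {a b : G} (ha : a < one) (hb : one < b) :
    ∃ p q, p < one ∧ one < q ∧ gvld p q a b := by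
  have hone : (one : G) ∈ Ioo a b := ⟨ha, hb⟩
  have hW : (fun p : G × G => op p.1 p.2) ⁻¹' Ioo a b ∈ 𝓝 ((one : G), (one : G)) :=
    (isOpen_Ioo.preimage hc.1).mem_nhds (by simpa [mem_preimage, op_one] using hone)
  rw [mem_nhds_prod_iff] at hW
  obtain ⟨U, hU, V, hV, hUV⟩ := hW
  have hI : (inv : G → G) ⁻¹' Ioo a b ∈ 𝓝 (one : G) :=
    (isOpen_Ioo.preimage hc.2).mem_nhds (by simpa [mem_preimage, gg_inv_one] using hone)
  have hN : U ∩ V ∩ (inv : G → G) ⁻¹' Ioo a b ∈ 𝓝 (one : G) :=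
    Filter.inter_mem (Filter.inter_mem hU hV) hI
  obtain ⟨p, q, hp, hq, hpq⟩ := gg_exists_Ioo hN ha hb
  refine ⟨p, q, hp, hq, fun x hx y hy => ?_, fun x hx => ?_⟩
  · exact hUV (Set.mk_mem_prod (hpq hx).1.1 (hpq hy).1.2)
  · exact (hpq hx).2

end OrderAux

section Cof

variable [TopologicalSpace G] [LinearOrder G]

/-- cofinal-from-the-left sets at `one` -/
def gcofL (S : Set G) : Prop :=
  (∀ x ∈ S, x < one) ∧ ∀ a, a < one → ∃ s ∈ S, a ≤ s

/-- coinitial-from-the-right sets at `one` -/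
def gcoiR (T : Set G) : Prop :=
  (∀ x ∈ T, one < x) ∧ ∀ b, one < b → ∃ t ∈ T, t ≤ b

def gpropA (a₀ : G) : Prop :=
  ∃ a', a' < one ∧ ∀ b, one < b → ∃ q, one < q ∧ gvld a' q a₀ b

def gpropB (b₀ : G) : Prop :=
  ∃ b', one < b' ∧ ∀ a, a < one → ∃ p, p < one ∧ gvld p b' a b₀

theorem gg_sgL (hRne : ∃ b : G, one < b) {a₀ a' : G}
    (h : ∀ b, one < b → ∃ q, one < q ∧ gvld a' q a₀ b) :
    (∀ x y : G, a' < x → x ≤ one → a' < y → y ≤ one → a₀ < op x y ∧ op x y ≤ one) ∧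
      (∀ x : G, a' < x → x ≤ one → a₀ < inv x ∧ inv x ≤ one) := by
  have key : ∀ x : G, a' < x → x ≤ one → ∀ b, one < b →
      (∀ y, a' < y → y ≤ one → op x y ∈ Ioo a₀ b) ∧ inv x ∈ Ioo a₀ b := by
    intro x hx1 hx2 b hb
    obtain ⟨q, hq, hv⟩ := h b hb
    have hxm : x ∈ Ioo a' q := ⟨hx1, lt_of_le_of_lt hx2 hq⟩
    exact ⟨fun y hy1 hy2 => hv.1 x hxm y ⟨hy1, lt_of_le_of_lt hy2 hq⟩, hv.2 x hxm⟩
  obtain ⟨b₁, hb₁⟩ := hRne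
  constructor
  · intro x y hx1 hx2 hy1 hy2
    refine ⟨((key x hx1 hx2 b₁ hb₁).1 y hy1 hy2).1, ?_⟩
    by_contra hgt
    exact absurd ((key x hx1 hx2 (op x y) (not_le.mp hgt)).1 y hy1 hy2).2 (lt_irrefl _)
  · intro x hx1 hx2
    refine ⟨(key x hx1 hx2 b₁ hb₁).2.1, ?_⟩
    by_contra hgt
    exact absurd (key x hx1 hx2 (inv x) (not_le.mp hgt)).2.2 (lt_irrefl _)

theorem gg_sgR (hLne : ∃ a : G, a < one) {b₀ b' : G}
    (h : ∀ a, a < one → ∃ p, p < one ∧ gvld p b' a b₀) :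
    (∀ x y : G, one ≤ x → x < b' → one ≤ y → y < b' → one ≤ op x y ∧ op x y < b₀) ∧
      (∀ x : G, one ≤ x → x < b' → one ≤ inv x ∧ inv x < b₀) := by
  have key : ∀ x : G, one ≤ x → x < b' → ∀ a, a < one →
      (∀ y, one ≤ y → y < b' → op x y ∈ Ioo a b₀) ∧ inv x ∈ Ioo a b₀ := by
    intro x hx1 hx2 a ha
    obtain ⟨p, hp, hv⟩ := h a ha
    have hxm : x ∈ Ioo p b' := ⟨lt_of_lt_of_le hp hx1, hx2⟩
    exact ⟨fun y hy1 hy2 => hv.1 x hxm y ⟨lt_of_lt_of_le hp hy1, hy2⟩, hv.2 x hxm⟩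
  obtain ⟨a₁, ha₁⟩ := hLne
  constructor
  · intro x y hx1 hx2 hy1 hy2
    refine ⟨?_, ((key x hx1 hx2 a₁ ha₁).1 y hy1 hy2).2⟩
    by_contra hgt
    exact absurd ((key x hx1 hx2 (op x y) (not_le.mp hgt)).1 y hy1 hy2).1 (lt_irrefl _)
  · intro x hx1 hx2
    refine ⟨?_, (key x hx1 hx2 a₁ ha₁).2.2⟩
    by_contra hgt
    exact absurd (key x hx1 hx2 (inv x) (not_le.mp hgt)).2.1 (lt_irrefl _)

variable [OrderTopology G]

theorem gg_notA_transfer (hc : ContinuousGyroOps G) {a₀ : G} (ha₀ : a₀ < one)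
    (hnA : ¬ gpropA a₀) {S T : Set G} (hS : gcofL S) (hT : gcoiR T) :
    (∃ T' : Set G, gcoiR T' ∧ #T' ≤ #S) ∧ (∃ S' : Set G, gcofL S' ∧ #S' ≤ #T) := by
  classical
  have hγ : ∀ a', a' < one → ∃ b, one < b ∧ ∀ q, one < q → ¬ gvld a' q a₀ b := by
    intro a' ha'
    by_contra hcon
    push_neg at hcon
    exact hnA ⟨a', ha', hcon⟩
  choose γ hγ1 hγ2 using hγ
  constructor
  · refine ⟨range (fun s : S => γ s.1 (hS.1 s.1 s.2)), ⟨?_, ?_⟩, Cardinal.mk_range_le⟩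
    · rintro x ⟨s, rfl⟩
      exact hγ1 _ _
    · intro b hb
      obtain ⟨p, q, hp, hq, hv⟩ := gg_cont_valid hc ha₀ hb
      obtain ⟨s, hsS, hps⟩ := hS.2 p hp
      refine ⟨γ s (hS.1 s hsS), ⟨⟨s, hsS⟩, rfl⟩, ?_⟩
      by_contra hbt
      exact hγ2 s (hS.1 s hsS) q hq
        (gvld_mono hv hps le_rfl le_rfl (le_of_lt (not_le.mp hbt)))
  · have hw : ∀ t : G, one < t → ∃ p q, p < one ∧ one < q ∧ gvld p q a₀ t := fun t ht =>
      gg_cont_valid hc ha₀ ht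
    choose P Q hP hQ hV using hw
    refine ⟨range (fun t : T => P t.1 (hT.1 t.1 t.2)), ⟨?_, ?_⟩, Cardinal.mk_range_le⟩
    · rintro x ⟨t, rfl⟩
      exact hP _ _
    · intro a ha
      obtain ⟨t, htT, htb⟩ := hT.2 (γ a ha) (hγ1 a ha)
      refine ⟨P t (hT.1 t htT), ⟨⟨t, htT⟩, rfl⟩, ?_⟩
      by_contra hpa
      exact hγ2 a ha (Q t (hT.1 t htT)) (hQ t (hT.1 t htT))
        (gvld_mono (hV t (hT.1 t htT)) (le_of_lt (not_le.mp hpa)) le_rfl le_rfl htb)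

theorem gg_notB_transfer (hc : ContinuousGyroOps G) {b₀ : G} (hb₀ : one < b₀)
    (hnB : ¬ gpropB b₀) {S T : Set G} (hS : gcofL S) (hT : gcoiR T) :
    (∃ S' : Set G, gcofL S' ∧ #S' ≤ #T) ∧ (∃ T' : Set G, gcoiR T' ∧ #T' ≤ #S) := by
  classical
  have hγ : ∀ b', one < b' → ∃ a, a < one ∧ ∀ p, p < one → ¬ gvld p b' a b₀ := by
    intro b' hb'
    by_contra hcon
    push_neg at hcon
    exact hnB ⟨b', hb', hcon⟩
  choose γ hγ1 hγ2 using hγ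
  constructor
  · refine ⟨range (fun t : T => γ t.1 (hT.1 t.1 t.2)), ⟨?_, ?_⟩, Cardinal.mk_range_le⟩
    · rintro x ⟨t, rfl⟩
      exact hγ1 _ _
    · intro a ha
      obtain ⟨p, q, hp, hq, hv⟩ := gg_cont_valid hc ha hb₀
      obtain ⟨t, htT, htq⟩ := hT.2 q hq
      refine ⟨γ t (hT.1 t htT), ⟨⟨t, htT⟩, rfl⟩, ?_⟩
      by_contra hat
      exact hγ2 t (hT.1 t htT) p hp
        (gvld_mono hv le_rfl htq (le_of_lt (not_le.mp hat)) le_rfl)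
  · have hw : ∀ s : G, s < one → ∃ p q, p < one ∧ one < q ∧ gvld p q s b₀ := fun s hs =>
      gg_cont_valid hc hs hb₀
    choose P Q hP hQ hV using hw
    refine ⟨range (fun s : S => Q s.1 (hS.1 s.1 s.2)), ⟨?_, ?_⟩, Cardinal.mk_range_le⟩
    · rintro x ⟨s, rfl⟩
      exact hQ _ _
    · intro b hb
      obtain ⟨s, hsS, hsb⟩ := hS.2 (γ b hb) (hγ1 b hb)
      refine ⟨Q s (hS.1 s hsS), ⟨⟨s, hsS⟩, rfl⟩, ?_⟩
      by_contra hqb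
      exact hγ2 b hb (P s (hS.1 s hsS)) (hP s (hS.1 s hsS))
        (gvld_mono (hV s (hS.1 s hsS)) le_rfl (le_of_lt (not_le.mp hqb)) hsb le_rfl)

end Cof

section Seq

variable [TopologicalSpace G] [LinearOrder G] [OrderTopology G]

theorem gg_seqL (hc : ContinuousGyroOps G)
    (hLlim : ∀ N ∈ 𝓝 (one : G), (N ∩ Iio (one : G)).Nonempty)
    (hRlim : ∀ N ∈ 𝓝 (one : G), (N ∩ Ioi (one : G)).Nonempty)
    (hA : ∀ a₀, a₀ < (one : G) → gpropA a₀) :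
    ∃ c : ℕ → G, (∀ n, c n < one) ∧ (∀ n m, n ≤ m → c n ≤ c m) ∧
      ∀ a, a < (one : G) → ∃ n, a ≤ c n := by
  classical
  obtain ⟨x0, hx0mem⟩ := hLlim univ Filter.univ_mem
  have hx0 : x0 < one := hx0mem.2
  have hRne : ∃ b : G, one < b := by
    obtain ⟨y, hy⟩ := hRlim univ Filter.univ_mem
    exact ⟨y, hy.2⟩
  choose σ hσ1 hσ2 using hA
  let F : {x : G // x < one} → {x : G // x < one} := fun p =>
    ⟨max (σ p.1 p.2) p.1, max_lt (hσ1 p.1 p.2) p.2⟩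
  let c : ℕ → {x : G // x < one} := fun n => F^[n] ⟨x0, hx0⟩
  have hsucc : ∀ n, c (n + 1) = F (c n) := fun n => Function.iterate_succ_apply' F n _
  have hmono : ∀ n m, n ≤ m → (c n : G) ≤ (c m : G) := by
    have : Monotone fun n => ((c n : G)) := by
      apply monotone_nat_of_le_succ
      intro n
      rw [hsucc n]
      exact le_max_right _ _
    exact fun n m h => this h
  have hσle : ∀ n, σ (c n).1 (c n).2 ≤ ((c (n + 1) : G)) := by
    intro n
    rw [hsucc n]
    exact le_max_left _ _
  by_cases hcof : ∀ a, a < (one : G) → ∃ n, a ≤ (c n : G)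
  · exact ⟨fun n => (c n).1, fun n => (c n).2, hmono, hcof⟩
  · exfalso
    push_neg at hcof
    obtain ⟨a₁, ha₁, hbd⟩ := hcof
    -- the "subgroup" H
    set H : Set G := {x | x ≤ one ∧ ∀ n, ((c n : G)) < x} with hH
    have hOH : Ioo a₁ one ⊆ H := by
      intro x hx
      exact ⟨le_of_lt hx.2, fun n => lt_trans (hbd n) hx.1⟩
    have hHop : ∀ x ∈ H, ∀ y ∈ H, op x y ∈ H := by
      intro x hx y hy
      have hkey : ∀ n, ((c n : G)) < op x y ∧ op x y ≤ one := by
        intro n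
        refine (gg_sgL hRne (hσ2 (c n).1 (c n).2)).1 x y ?_ hx.1 ?_ hy.1
        · exact lt_of_le_of_lt (hσle n) (hx.2 (n + 1))
        · exact lt_of_le_of_lt (hσle n) (hy.2 (n + 1))
      exact ⟨(hkey 0).2, fun n => (hkey n).1⟩
    have hHinv : ∀ x ∈ H, inv x ∈ H := by
      intro x hx
      have hkey : ∀ n, ((c n : G)) < inv x ∧ inv x ≤ one := by
        intro n
        refine (gg_sgL hRne (hσ2 (c n).1 (c n).2)).2 x ?_ hx.1
        exact lt_of_le_of_lt (hσle n) (hx.2 (n + 1))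
      exact ⟨(hkey 0).2, fun n => (hkey n).1⟩
    obtain ⟨a₂, ha₂⟩ := hLlim (Ioi a₁) (isOpen_Ioi.mem_nhds ha₁)
    have ha₂O : a₂ ∈ Ioo a₁ one := ⟨ha₂.1, ha₂.2⟩
    have ha₂H : a₂ ∈ H := hOH ha₂O
    have hWopen : IsOpen ((fun x : G => op (inv a₂) x) '' Ioo a₁ one) :=
      gg_isOpen_image hc.1 (inv a₂) isOpen_Ioo
    have hW1 : (one : G) ∈ (fun x : G => op (inv a₂) x) '' Ioo a₁ one :=
      ⟨a₂, ha₂O, inv_op a₂⟩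
    have hWH : (fun x : G => op (inv a₂) x) '' Ioo a₁ one ⊆ H := by
      rintro _ ⟨x, hxO, rfl⟩
      exact hHop (inv a₂) (hHinv a₂ ha₂H) x (hOH hxO)
    have hHnhds : H ∈ 𝓝 (one : G) := Filter.mem_of_superset (hWopen.mem_nhds hW1) hWH
    obtain ⟨y, hyH, hy1⟩ := hRlim H hHnhds
    exact absurd (lt_of_lt_of_le hy1 hyH.1) (lt_irrefl _)

theorem gg_seqR (hc : ContinuousGyroOps G)
    (hLlim : ∀ N ∈ 𝓝 (one : G), (N ∩ Iio (one : G)).Nonempty)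
    (hRlim : ∀ N ∈ 𝓝 (one : G), (N ∩ Ioi (one : G)).Nonempty)
    (hB : ∀ b₀, (one : G) < b₀ → gpropB b₀) :
    ∃ r : ℕ → G, (∀ n, one < r n) ∧ (∀ n m, n ≤ m → r m ≤ r n) ∧
      ∀ b, (one : G) < b → ∃ n, r n ≤ b := by
  classical
  obtain ⟨y0, hy0mem⟩ := hRlim univ Filter.univ_mem
  have hy0 : one < y0 := hy0mem.2
  have hLne : ∃ a : G, a < one := by
    obtain ⟨x, hx⟩ := hLlim univ Filter.univ_mem
    exact ⟨x, hx.2⟩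
  choose σ hσ1 hσ2 using hB
  let F : {x : G // one < x} → {x : G // one < x} := fun p =>
    ⟨min (σ p.1 p.2) p.1, lt_min (hσ1 p.1 p.2) p.2⟩
  let r : ℕ → {x : G // one < x} := fun n => F^[n] ⟨y0, hy0⟩
  have hsucc : ∀ n, r (n + 1) = F (r n) := fun n => Function.iterate_succ_apply' F n _
  have hmono : ∀ n m, n ≤ m → (r m : G) ≤ (r n : G) := by
    have : Antitone fun n => ((r n : G)) := by
      apply antitone_nat_of_succ_le
      intro n
      rw [hsucc n]
      exact min_le_right _ _
    exact fun n m h => this h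
  have hσle : ∀ n, ((r (n + 1) : G)) ≤ σ (r n).1 (r n).2 := by
    intro n
    rw [hsucc n]
    exact min_le_left _ _
  by_cases hcoi : ∀ b, (one : G) < b → ∃ n, (r n : G) ≤ b
  · exact ⟨fun n => (r n).1, fun n => (r n).2, hmono, hcoi⟩
  · exfalso
    push_neg at hcoi
    obtain ⟨b₁, hb₁, hbd⟩ := hcoi
    set H : Set G := {x | one ≤ x ∧ ∀ n, x < ((r n : G))} with hH
    have hOH : Ioo one b₁ ⊆ H := by
      intro x hx
      exact ⟨le_of_lt hx.1, fun n => lt_trans hx.2 (hbd n)⟩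
    have hHop : ∀ x ∈ H, ∀ y ∈ H, op x y ∈ H := by
      intro x hx y hy
      have hkey : ∀ n, one ≤ op x y ∧ op x y < ((r n : G)) := by
        intro n
        refine (gg_sgR hLne (hσ2 (r n).1 (r n).2)).1 x y hx.1 ?_ hy.1 ?_
        · exact lt_of_lt_of_le (hx.2 (n + 1)) (hσle n)
        · exact lt_of_lt_of_le (hy.2 (n + 1)) (hσle n)
      exact ⟨(hkey 0).1, fun n => (hkey n).2⟩
    have hHinv : ∀ x ∈ H, inv x ∈ H := by
      intro x hx
      have hkey : ∀ n, one ≤ inv x ∧ inv x < ((r n : G)) := by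
        intro n
        refine (gg_sgR hLne (hσ2 (r n).1 (r n).2)).2 x hx.1 ?_
        exact lt_of_lt_of_le (hx.2 (n + 1)) (hσle n)
      exact ⟨(hkey 0).1, fun n => (hkey n).2⟩
    obtain ⟨b₂, hb₂⟩ := hRlim (Iio b₁) (isOpen_Iio.mem_nhds hb₁)
    have hb₂O : b₂ ∈ Ioo one b₁ := ⟨hb₂.2, hb₂.1⟩
    have hb₂H : b₂ ∈ H := hOH hb₂O
    have hWopen : IsOpen ((fun x : G => op (inv b₂) x) '' Ioo one b₁) :=
      gg_isOpen_image hc.1 (inv b₂) isOpen_Ioo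
    have hW1 : (one : G) ∈ (fun x : G => op (inv b₂) x) '' Ioo one b₁ :=
      ⟨b₂, hb₂O, inv_op b₂⟩
    have hWH : (fun x : G => op (inv b₂) x) '' Ioo one b₁ ⊆ H := by
      rintro _ ⟨x, hxO, rfl⟩
      exact hHop (inv b₂) (hHinv b₂ hb₂H) x (hOH hxO)
    have hHnhds : H ∈ 𝓝 (one : G) := Filter.mem_of_superset (hWopen.mem_nhds hW1) hWH
    obtain ⟨y, hyH, hy1⟩ := hLlim H hHnhds
    exact absurd (lt_of_le_of_lt hyH.1 hy1) (lt_irrefl _)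

end Seq

section Interleave

variable [TopologicalSpace G] [LinearOrder G] [OrderTopology G]

theorem gg_interleave
    (hLlim : ∀ N ∈ 𝓝 (one : G), (N ∩ Iio (one : G)).Nonempty)
    (hRlim : ∀ N ∈ 𝓝 (one : G), (N ∩ Ioi (one : G)).Nonempty)
    {S T : Set G} (hS : gcofL S) (hT : gcoiR T) (hST : #S = #T)
    (hSmin : ∀ S' : Set G, gcofL S' → #S ≤ #S')
    (hTmin : ∀ T' : Set G, gcoiR T' → #T ≤ #T') :
    ∃ 𝒰 : Set (Set G), (∀ U ∈ 𝒰, U ∈ 𝓝 (one : G)) ∧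
      (∀ V ∈ 𝓝 (one : G), ∃ U ∈ 𝒰, U ⊆ V) ∧
      ∀ U ∈ 𝒰, ∀ V ∈ 𝒰, U ⊆ V ∨ V ⊆ U := by
  classical
  have hmkι : #((#S).ord.ToType) = #S := by rw [Cardinal.mk_toType, Cardinal.card_ord]
  obtain ⟨eS⟩ : Nonempty ((#S).ord.ToType ≃ S) := Cardinal.eq.mp hmkι
  obtain ⟨eT⟩ : Nonempty ((#S).ord.ToType ≃ T) := Cardinal.eq.mp (hmkι.trans hST)
  let f : (#S).ord.ToType → G × G := WellFoundedLT.fix fun i rec =>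
    if h : ∃ pq : G × G, (pq.1 < one ∧ one < pq.2) ∧ (eS i : G) ≤ pq.1 ∧ pq.2 ≤ (eT i : G) ∧
        ∀ (j) (hj : j < i), (rec j hj).1 < pq.1 ∧ pq.2 < (rec j hj).2
      then h.choose else (one, one)
  have hfix : ∀ i, f i =
      if h : ∃ pq : G × G, (pq.1 < one ∧ one < pq.2) ∧ (eS i : G) ≤ pq.1 ∧ pq.2 ≤ (eT i : G) ∧
          ∀ (j) (hj : j < i), (f j).1 < pq.1 ∧ pq.2 < (f j).2
        then h.choose else (one, one) := fun i => WellFoundedLT.fix_eq _ i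
  have hP : ∀ i, ((f i).1 < one ∧ one < (f i).2) ∧ (eS i : G) ≤ (f i).1 ∧
      (f i).2 ≤ (eT i : G) ∧ ∀ j, j < i → (f j).1 < (f i).1 ∧ (f i).2 < (f j).2 := by
    intro i
    refine WellFoundedLT.induction
      (motive := fun i => ((f i).1 < one ∧ one < (f i).2) ∧ (eS i : G) ≤ (f i).1 ∧
        (f i).2 ≤ (eT i : G) ∧ ∀ j, j < i → (f j).1 < (f i).1 ∧ (f i).2 < (f j).2) i ?_
    intro i IH
    have hex : ∃ pq : G × G, (pq.1 < one ∧ one < pq.2) ∧ (eS i : G) ≤ pq.1 ∧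
        pq.2 ≤ (eT i : G) ∧ ∀ (j) (hj : j < i), (f j).1 < pq.1 ∧ pq.2 < (f j).2 := by
      have hbd : ∃ a, a < (one : G) ∧ ∀ j, j < i → (f j).1 < a := by
        by_contra hcon
        push_neg at hcon
        have hcof : gcofL ((fun j => (f j).1) '' Iio i) := by
          refine ⟨?_, fun a ha => ?_⟩
          · rintro _ ⟨j, hj, rfl⟩
            exact (IH j hj).1.1
          · obtain ⟨j, hj, hja⟩ := hcon a ha
            exact ⟨(f j).1, ⟨j, hj, rfl⟩, hja⟩
        have h2 : #((fun j => (f j).1) '' Iio i) < #S :=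
          lt_of_le_of_lt Cardinal.mk_image_le (Cardinal.mk_Iio_ord_toType i)
        exact absurd (lt_of_le_of_lt (hSmin _ hcof) h2) (lt_irrefl _)
      have hbd2 : ∃ b, (one : G) < b ∧ ∀ j, j < i → b < (f j).2 := by
        by_contra hcon
        push_neg at hcon
        have hcoi : gcoiR ((fun j => (f j).2) '' Iio i) := by
          refine ⟨?_, fun b hb => ?_⟩
          · rintro _ ⟨j, hj, rfl⟩
            exact (IH j hj).1.2
          · obtain ⟨j, hj, hjb⟩ := hcon b hb
            exact ⟨(f j).2, ⟨j, hj, rfl⟩, hjb⟩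
        have h2 : #((fun j => (f j).2) '' Iio i) < #S :=
          lt_of_le_of_lt Cardinal.mk_image_le (Cardinal.mk_Iio_ord_toType i)
        have h3 := hTmin _ hcoi
        rw [← hST] at h3
        exact absurd (lt_of_le_of_lt h3 h2) (lt_irrefl _)
      obtain ⟨a₁, ha₁, ha₁bd⟩ := hbd
      obtain ⟨b₁, hb₁, hb₁bd⟩ := hbd2
      refine ⟨(max a₁ (eS i : G), min b₁ (eT i : G)),
        ⟨max_lt ha₁ (hS.1 _ (eS i).2), lt_min hb₁ (hT.1 _ (eT i).2)⟩,
        le_max_right _ _, min_le_right _ _, fun j hj =>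
        ⟨lt_of_lt_of_le (ha₁bd j hj) (le_max_left _ _),
         lt_of_le_of_lt (min_le_left _ _) (hb₁bd j hj)⟩⟩
    have hfi : f i = hex.choose := by
      rw [hfix i]
      exact dif_pos hex
    rw [hfi]
    exact hex.choose_spec
  have hmono1 : ∀ i j, i ≤ j → (f i).1 ≤ (f j).1 := by
    intro i j hij
    rcases lt_or_eq_of_le hij with h | h
    · exact le_of_lt ((hP j).2.2.2 i h).1
    · rw [h]
  have hmono2 : ∀ i j, i ≤ j → (f j).2 ≤ (f i).2 := by
    intro i j hij
    rcases lt_or_eq_of_le hij with h | h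
    · exact le_of_lt ((hP j).2.2.2 i h).2
    · rw [h]
  refine ⟨range (fun i => Ioo (f i).1 (f i).2), ?_, ?_, ?_⟩
  · rintro _ ⟨i, rfl⟩
    exact isOpen_Ioo.mem_nhds ⟨(hP i).1.1, (hP i).1.2⟩
  · intro V hV
    have hLne : ∃ a : G, a < one := by
      obtain ⟨x, hx⟩ := hLlim univ Filter.univ_mem
      exact ⟨x, hx.2⟩
    have hRne : ∃ b : G, one < b := by
      obtain ⟨y, hy⟩ := hRlim univ Filter.univ_mem
      exact ⟨y, hy.2⟩
    obtain ⟨a, ha⟩ := hLne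
    obtain ⟨b, hb⟩ := hRne
    obtain ⟨p, q, hp, hq, hpq⟩ := gg_exists_Ioo hV ha hb
    obtain ⟨s, hsS, hps⟩ := hS.2 p hp
    obtain ⟨t, htT, htq⟩ := hT.2 q hq
    set i₁ := eS.symm ⟨s, hsS⟩
    set i₂ := eT.symm ⟨t, htT⟩
    refine ⟨Ioo (f (max i₁ i₂)).1 (f (max i₁ i₂)).2, ⟨max i₁ i₂, rfl⟩, fun x hx => hpq ?_⟩
    have h1 : p ≤ (f (max i₁ i₂)).1 := by
      refine le_trans ?_ (hmono1 i₁ _ (le_max_left _ _))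
      have : (eS i₁ : G) = s := by rw [Equiv.apply_symm_apply]
      exact le_trans hps (this ▸ (hP i₁).2.1)
    have h2 : (f (max i₁ i₂)).2 ≤ q := by
      refine le_trans (hmono2 i₂ _ (le_max_right _ _)) ?_
      have : (eT i₂ : G) = t := by rw [Equiv.apply_symm_apply]
      exact le_trans (this ▸ (hP i₂).2.2.1) htq
    exact ⟨lt_of_le_of_lt h1 hx.1, lt_of_lt_of_le hx.2 h2⟩
  · rintro _ ⟨i, rfl⟩ _ ⟨j, rfl⟩
    rcases le_total i j with h | h
    · exact Or.inr (Ioo_subset_Ioo (hmono1 i j h) (hmono2 i j h))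
    · exact Or.inl (Ioo_subset_Ioo (hmono1 j i h) (hmono2 j i h))

end Interleave

section Mins

variable [TopologicalSpace G] [LinearOrder G]

theorem gg_minexL : ∃ S : Set G, gcofL S ∧ ∀ S' : Set G, gcofL S' → #S ≤ #S' := by
  classical
  have hne : {c : Cardinal | ∃ S : Set G, gcofL S ∧ #S = c}.Nonempty :=
    ⟨#(Iio (one : G)), Iio one, ⟨fun x hx => hx, fun a ha => ⟨a, ha, le_refl a⟩⟩, rfl⟩
  obtain ⟨S, hS, hSc⟩ := Cardinal.lt_wf.min_mem _ hne
  refine ⟨S, hS, fun S' hS' => ?_⟩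
  rw [hSc]
  exact le_of_not_gt (Cardinal.lt_wf.not_lt_min {c : Cardinal | ∃ S : Set G, gcofL S ∧ #S = c} ⟨S', hS', rfl⟩)

theorem gg_minexR : ∃ T : Set G, gcoiR T ∧ ∀ T' : Set G, gcoiR T' → #T ≤ #T' := by
  classical
  have hne : {c : Cardinal | ∃ T : Set G, gcoiR T ∧ #T = c}.Nonempty :=
    ⟨#(Ioi (one : G)), Ioi one, ⟨fun x hx => hx, fun b hb => ⟨b, hb, le_refl b⟩⟩, rfl⟩
  obtain ⟨T, hT, hTc⟩ := Cardinal.lt_wf.min_mem _ hne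
  refine ⟨T, hT, fun T' hT' => ?_⟩
  rw [hTc]
  exact le_of_not_gt (Cardinal.lt_wf.not_lt_min {c : Cardinal | ∃ T : Set G, gcoiR T ∧ #T = c} ⟨T', hT', rfl⟩)

end Mins

/-- Every topologically orderable gyrogroup has a totally ordered neighborhood base
at the identity. -/
theorem stmt7 {G : Type u} [Gyrogroup G] [TopologicalSpace G]
    (hc : ContinuousGyroOps G) (ho : TopologicallyOrderable G) :
    ∃ 𝒰 : Set (Set G), (∀ U ∈ 𝒰, U ∈ nhds (one : G)) ∧
      (∀ V ∈ nhds (one : G), ∃ U ∈ 𝒰, U ⊆ V) ∧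
      (∀ U ∈ 𝒰, ∀ V ∈ 𝒰, U ⊆ V ∨ V ⊆ U) := by
  classical
  obtain ⟨l, hl⟩ := ho
  letI := l
  haveI : OrderTopology G := ⟨hl⟩
  by_cases hL : ∀ N ∈ 𝓝 (one : G), (N ∩ Iio (one : G)).Nonempty
  · by_cases hR : ∀ N ∈ 𝓝 (one : G), (N ∩ Ioi (one : G)).Nonempty
    · -- `one` is a two-sided limit point
      by_cases hA : ∀ a₀, a₀ < (one : G) → gpropA a₀
      · by_cases hB : ∀ b₀, (one : G) < b₀ → gpropB b₀
        · -- both "subsemigroup" properties hold: countable interleaving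
          obtain ⟨c, hc1, hc2, hc3⟩ := gg_seqL hc hL hR hA
          obtain ⟨r, hr1, hr2, hr3⟩ := gg_seqR hc hL hR hB
          refine ⟨range (fun n => Ioo (c n) (r n)), ?_, ?_, ?_⟩
          · rintro _ ⟨n, rfl⟩
            exact isOpen_Ioo.mem_nhds ⟨hc1 n, hr1 n⟩
          · intro V hV
            obtain ⟨a, ha⟩ : ∃ a : G, a < one := by
              obtain ⟨x, hx⟩ := hL univ Filter.univ_mem
              exact ⟨x, hx.2⟩
            obtain ⟨b, hb⟩ : ∃ b : G, one < b := by
              obtain ⟨y, hy⟩ := hR univ Filter.univ_mem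
              exact ⟨y, hy.2⟩
            obtain ⟨p, q, hp, hq, hpq⟩ := gg_exists_Ioo hV ha hb
            obtain ⟨n₁, hn₁⟩ := hc3 p hp
            obtain ⟨n₂, hn₂⟩ := hr3 q hq
            refine ⟨Ioo (c (max n₁ n₂)) (r (max n₁ n₂)), ⟨max n₁ n₂, rfl⟩,
              fun x hx => hpq ?_⟩
            exact ⟨lt_of_le_of_lt (le_trans hn₁ (hc2 n₁ _ (le_max_left _ _))) hx.1,
              lt_of_lt_of_le hx.2 (le_trans (hr2 n₂ _ (le_max_right _ _)) hn₂)⟩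
          · rintro _ ⟨n, rfl⟩ _ ⟨m, rfl⟩
            rcases le_total n m with h | h
            · exact Or.inr (Ioo_subset_Ioo (hc2 n m h) (hr2 n m h))
            · exact Or.inl (Ioo_subset_Ioo (hc2 m n h) (hr2 m n h))
        · -- property B fails somewhere: both cofinalities coincide
          push_neg at hB
          obtain ⟨b₀, hb₀, hnB⟩ := hB
          obtain ⟨S, hS, hSmin⟩ := gg_minexL (G := G)
          obtain ⟨T, hT, hTmin⟩ := gg_minexR (G := G)
          obtain ⟨⟨S', hS', hS'c⟩, ⟨T', hT', hT'c⟩⟩ := gg_notB_transfer hc hb₀ hnB hS hT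
          exact gg_interleave hL hR hS hT
            (le_antisymm (le_trans (hSmin S' hS') hS'c) (le_trans (hTmin T' hT') hT'c))
            hSmin hTmin
      · -- property A fails somewhere: both cofinalities coincide
        push_neg at hA
        obtain ⟨a₀, ha₀, hnA⟩ := hA
        obtain ⟨S, hS, hSmin⟩ := gg_minexL (G := G)
        obtain ⟨T, hT, hTmin⟩ := gg_minexR (G := G)
        obtain ⟨⟨T', hT', hT'c⟩, ⟨S', hS', hS'c⟩⟩ := gg_notA_transfer hc ha₀ hnA hS hT
        exact gg_interleave hL hR hS hT
          (le_antisymm (le_trans (hSmin S' hS') hS'c) (le_trans (hTmin T' hT') hT'c))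
          hSmin hTmin
    · -- not a limit from the right
      push_neg at hR
      obtain ⟨N, hN, hNe⟩ := hR
      have hNsub : N ⊆ Iic (one : G) := by
        intro x hx
        by_contra hgt
        exact eq_empty_iff_forall_notMem.mp hNe x ⟨hx, not_le.mp hgt⟩
      refine ⟨(fun a => N ∩ Ioi a) '' Iio (one : G), ?_, ?_, ?_⟩
      · rintro _ ⟨a, ha, rfl⟩
        exact Filter.inter_mem hN (isOpen_Ioi.mem_nhds ha)
      · intro V hV
        obtain ⟨a, ha⟩ : ∃ a : G, a < one := by
          obtain ⟨x, hx⟩ := hL univ Filter.univ_mem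
          exact ⟨x, hx.2⟩
        obtain ⟨l', hl', hIoc⟩ := exists_Ioc_subset_of_mem_nhds hV ⟨a, ha⟩
        exact ⟨N ∩ Ioi l', ⟨l', hl', rfl⟩, fun x hx => hIoc ⟨hx.2, hNsub hx.1⟩⟩
      · rintro _ ⟨a, ha, rfl⟩ _ ⟨a', ha', rfl⟩
        rcases le_total a a' with h | h
        · exact Or.inr (fun x hx => ⟨hx.1, Ioi_subset_Ioi h hx.2⟩)
        · exact Or.inl (fun x hx => ⟨hx.1, Ioi_subset_Ioi h hx.2⟩)
  · by_cases hR : ∀ N ∈ 𝓝 (one : G), (N ∩ Ioi (one : G)).Nonempty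
    · -- not a limit from the left
      push_neg at hL
      obtain ⟨M, hM, hMe⟩ := hL
      have hMsub : M ⊆ Ici (one : G) := by
        intro x hx
        by_contra hlt
        exact eq_empty_iff_forall_notMem.mp hMe x ⟨hx, not_le.mp hlt⟩
      refine ⟨(fun b => M ∩ Iio b) '' Ioi (one : G), ?_, ?_, ?_⟩
      · rintro _ ⟨b, hb, rfl⟩
        exact Filter.inter_mem hM (isOpen_Iio.mem_nhds hb)
      · intro V hV
        obtain ⟨b, hb⟩ : ∃ b : G, one < b := by
          obtain ⟨y, hy⟩ := hR univ Filter.univ_mem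
          exact ⟨y, hy.2⟩
        obtain ⟨u, hu, hIco⟩ := exists_Ico_subset_of_mem_nhds hV ⟨b, hb⟩
        exact ⟨M ∩ Iio u, ⟨u, hu, rfl⟩, fun x hx => hIco ⟨hMsub hx.1, hx.2⟩⟩
      · rintro _ ⟨b, hb, rfl⟩ _ ⟨b', hb', rfl⟩
        rcases le_total b b' with h | h
        · exact Or.inl (fun x hx => ⟨hx.1, Iio_subset_Iio h hx.2⟩)
        · exact Or.inr (fun x hx => ⟨hx.1, Iio_subset_Iio h hx.2⟩)
    · -- isolated point
      push_neg at hL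
      push_neg at hR
      obtain ⟨M, hM, hMe⟩ := hL
      obtain ⟨N, hN, hNe⟩ := hR
      have hMsub : M ⊆ Ici (one : G) := by
        intro x hx
        by_contra hlt
        exact eq_empty_iff_forall_notMem.mp hMe x ⟨hx, not_le.mp hlt⟩
      have hNsub : N ⊆ Iic (one : G) := by
        intro x hx
        by_contra hgt
        exact eq_empty_iff_forall_notMem.mp hNe x ⟨hx, not_le.mp hgt⟩
      refine ⟨{M ∩ N}, ?_, ?_, ?_⟩
      · rintro U hU
        rw [mem_singleton_iff] at hU
        rw [hU]
        exact Filter.inter_mem hM hN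
      · intro V hV
        refine ⟨M ∩ N, mem_singleton _, fun x hx => ?_⟩
        have : x = one := le_antisymm (hNsub hx.2) (hMsub hx.1)
        rw [this]
        exact mem_of_mem_nhds hV
      · rintro U hU V hV
        rw [mem_singleton_iff] at hU hV
        rw [hU, hV]
        exact Or.inl subset_rfl
end
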